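/- Let Γ denote the Gamma function, for H ∈ (1/2, 1) set c_H = √(2H·Γ(3/2−H) / (Γ(1/2+H)·Γ(2−2H))), let s < T be real numbers, and for g ∈ L²(s, T) define (G_H g)(τ) = c_H (H−1/2) ∫_τ^T (t−τ)^{H−3/2} g(t) dt for τ ∈ (s, T). Then there exists a constant c > 0 such that for all H ∈ (1/2, 1) and all g ∈ L²(s, T), ‖G_H g‖_{L²(s,T)} ≤ c ‖g‖_{L²(s,T)}. -/

import Mathlib

/-!
Write `α = H - 1/2`, so that `G_H g = c_H α · I g` with `(I g)(τ) = ∫_τ^T (t - τ)^(α-1) g(t) dt`.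
The kernel of `I` on `(s, T)²` has all row and column integrals bounded by `(T - s)^α / α`, so
by the Schur test (Cauchy–Schwarz in each row, then Tonelli) `‖I g‖₂ ≤ (T - s)^α / α · ‖g‖₂`,
and the `1/α` cancels the factor `α`. It remains that `(T - s)^α ≤ max 1 (T - s)` and that `c_H`
is bounded for `H ∈ (1/2, 1)`: the numerator `2H Γ(3/2 - H)` is at most `2√π` since `Γ` decreases
on `(0, 1]`, and the denominator is at least the square of the minimum of `Γ` on `(0, ∞)`.
-/

open Real MeasureTheory Set

noncomputable def cH (H : ℝ) : ℝ :=
  Real.sqrt (2 * H * Real.Gamma (3/2 - H) / (Real.Gamma (1/2 + H) * Real.Gamma (2 - 2*H)))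

noncomputable def GH (H T : ℝ) (g : ℝ → ℝ) (τ : ℝ) : ℝ :=
  cH H * (H - 1/2) * ∫ t in Set.Ioc τ T, (t - τ) ^ (H - 3/2) * g t

open scoped ENNReal

theorem exists_pos_forall_cH_le : ∃ C > 0, ∀ H ∈ Ioo (1/2 : ℝ) 1, cH H ≤ C := by
  obtain ⟨x₀, hx₀, hmin⟩ := exists_isMinOn_Gamma_Ioi
  set m := Gamma x₀
  have hm : 0 < m := Gamma_pos_of_pos (by linarith [hx₀.1])
  have hGamma_ge {y : ℝ} (hy : 0 < y) : m ≤ Gamma y := hmin (mem_Ioi.2 hy)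
  refine ⟨√(2 * √π / m ^ 2), by positivity, fun H ⟨hH₁, hH₂⟩ => sqrt_le_sqrt ?_⟩
  have hnum : 2 * H * Gamma (3/2 - H) ≤ 2 * √π := by
    have hGamma : Gamma (3/2 - H) ≤ Gamma (1/2) :=
      Gamma_strictAntiOn_Ioc.antitoneOn ⟨by norm_num, by norm_num⟩
        ⟨by linarith, by linarith⟩ (by linarith)
    rw [Gamma_one_half_eq] at hGamma
    have := Gamma_pos_of_pos (by linarith : (0:ℝ) < 3/2 - H)
    nlinarith
  have hden : m ^ 2 ≤ Gamma (1/2 + H) * Gamma (2 - 2*H) := by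
    rw [sq]
    exact mul_le_mul (hGamma_ge (by linarith)) (hGamma_ge (by linarith)) hm.le
      (Gamma_pos_of_pos (by linarith)).le
  exact div_le_div₀ (by positivity) hnum (by positivity) hden

theorem rpow_le_max_one {x y : ℝ} (hx : 0 ≤ x) (hy₀ : 0 ≤ y) (hy₁ : y ≤ 1) :
    x ^ y ≤ max 1 x := by
  rcases le_total x 1 with h | h
  · exact (rpow_le_one hx h hy₀).trans (le_max_left _ _)
  · exact (rpow_le_self_of_one_le h hy₁).trans (le_max_right _ _)

theorem sq_eLpNorm_two {X ε : Type*} [MeasurableSpace X] [ENorm ε] (f : X → ε)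
    (μ : Measure X) : eLpNorm f 2 μ ^ 2 = ∫⁻ x, ‖f x‖ₑ ^ 2 ∂μ := by
  simpa using eLpNorm_nnreal_pow_eq_lintegral (f := f) (μ := μ) (p := 2) two_ne_zero

section SchurTest

variable {X Y : Type*} [MeasurableSpace X] [MeasurableSpace Y] {μ : Measure X} {ν : Measure Y}

theorem lintegral_mul_sq_le {w f : Y → ℝ≥0∞} (hw : AEMeasurable w ν) (hf : AEMeasurable f ν) :
    (∫⁻ y, w y * f y ∂ν) ^ 2 ≤ (∫⁻ y, w y ∂ν) * ∫⁻ y, w y * f y ^ 2 ∂ν := by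
  have holder := ENNReal.lintegral_mul_norm_pow_le hw (hw.mul (hf.pow_const 2))
    (p := 1 / 2) (q := 1 / 2) (by norm_num) (by norm_num) (by norm_num)
  have hsplit (y : Y) : w y ^ (1 / 2 : ℝ) * (w y * f y ^ 2) ^ (1 / 2 : ℝ) = w y * f y := by
    rw [ENNReal.mul_rpow_of_nonneg _ _ (by norm_num), ← mul_assoc,
      ← ENNReal.rpow_add_of_nonneg _ _ (by norm_num) (by norm_num), ← ENNReal.rpow_natCast,
      ← ENNReal.rpow_mul]
    norm_num
  simp only [Pi.mul_apply, hsplit] at holder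
  calc (∫⁻ y, w y * f y ∂ν) ^ 2
      ≤ ((∫⁻ y, w y ∂ν) ^ (1 / 2 : ℝ) * (∫⁻ y, w y * f y ^ 2 ∂ν) ^ (1 / 2 : ℝ)) ^ 2 := by
        gcongr
    _ = (∫⁻ y, w y ∂ν) * ∫⁻ y, w y * f y ^ 2 ∂ν := by
        rw [mul_pow, ← ENNReal.rpow_natCast, ← ENNReal.rpow_mul, ← ENNReal.rpow_natCast,
          ← ENNReal.rpow_mul]
        norm_num

variable [SFinite μ] [SFinite ν] {k : X → Y → ℝ≥0∞}

theorem lintegral_sq_lintegral_kernel_mul_le (hk : Measurable (Function.uncurry k))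
    {f : Y → ℝ≥0∞} (hf : AEMeasurable f ν) {A B : ℝ≥0∞}
    (hrow : ∀ᵐ x ∂μ, ∫⁻ y, k x y ∂ν ≤ A) (hcol : ∀ᵐ y ∂ν, ∫⁻ x, k x y ∂μ ≤ B) :
    ∫⁻ x, (∫⁻ y, k x y * f y ∂ν) ^ 2 ∂μ ≤ A * B * ∫⁻ y, f y ^ 2 ∂ν := by
  have hkx (x : X) : Measurable (k x) := hk.comp measurable_prodMk_left
  have hky (y : Y) : Measurable fun x => k x y := hk.comp measurable_prodMk_right
  have hprod : AEMeasurable (Function.uncurry fun x y => k x y * f y ^ 2) (μ.prod ν) :=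
    hk.aemeasurable.mul (hf.pow_const 2).comp_snd
  calc ∫⁻ x, (∫⁻ y, k x y * f y ∂ν) ^ 2 ∂μ
      ≤ ∫⁻ x, A * ∫⁻ y, k x y * f y ^ 2 ∂ν ∂μ := by
        refine lintegral_mono_ae (hrow.mono fun x hx => ?_)
        exact (lintegral_mul_sq_le (hkx x).aemeasurable hf).trans (by gcongr)
    _ = A * ∫⁻ y, (∫⁻ x, k x y ∂μ) * f y ^ 2 ∂ν := by
        rw [lintegral_const_mul'' _ hprod.lintegral_prod_right, lintegral_lintegral_swap hprod]
        exact congrArg (A * ·) (lintegral_congr fun y => lintegral_mul_const _ (hky y))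
    _ ≤ A * ∫⁻ y, B * f y ^ 2 ∂ν := by
        gcongr A * ?_
        exact lintegral_mono_ae (hcol.mono fun y hy => by gcongr)
    _ = A * B * ∫⁻ y, f y ^ 2 ∂ν := by
        rw [lintegral_const_mul'' _ (hf.pow_const 2), mul_assoc]

theorem eLpNorm_two_le_of_kernel_bound {E F : Type*} [TopologicalSpace E] [ContinuousENorm E]
    [ENorm F] (hk : Measurable (Function.uncurry k)) {g : Y → E}
    (hg : AEStronglyMeasurable g ν) {G : X → F}
    (hG : ∀ᵐ x ∂μ, ‖G x‖ₑ ≤ ∫⁻ y, k x y * ‖g y‖ₑ ∂ν) {C : ℝ≥0∞}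
    (hrow : ∀ᵐ x ∂μ, ∫⁻ y, k x y ∂ν ≤ C) (hcol : ∀ᵐ y ∂ν, ∫⁻ x, k x y ∂μ ≤ C) :
    eLpNorm G 2 μ ≤ C * eLpNorm g 2 ν := by
  refine (ENNReal.pow_le_pow_left_iff two_ne_zero).1 ?_
  calc eLpNorm G 2 μ ^ 2 = ∫⁻ x, ‖G x‖ₑ ^ 2 ∂μ := sq_eLpNorm_two G μ
    _ ≤ ∫⁻ x, (∫⁻ y, k x y * ‖g y‖ₑ ∂ν) ^ 2 ∂μ :=
        lintegral_mono_ae (hG.mono fun x hx => by gcongr)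
    _ ≤ C * C * ∫⁻ y, ‖g y‖ₑ ^ 2 ∂ν := lintegral_sq_lintegral_kernel_mul_le hk hg.enorm hrow hcol
    _ = (C * eLpNorm g 2 ν) ^ 2 := by rw [mul_pow, sq_eLpNorm_two, sq]

end SchurTest

section RiemannLiouville

variable {α a b s T : ℝ}

theorem lintegral_Ioc_rpow_sub_left (hα : 0 < α) (hab : a ≤ b) :
    ∫⁻ t in Ioc a b, ENNReal.ofReal ((t - a) ^ (α - 1)) = ENNReal.ofReal ((b - a) ^ α / α) := by
  have hint : IntervalIntegrable (fun t => (t - a) ^ (α - 1)) volume a b := by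
    simpa using (intervalIntegral.intervalIntegrable_rpow' (by linarith : -1 < α - 1)
      (a := 0) (b := b - a)).comp_sub_right a
  rw [← ofReal_integral_eq_lintegral_ofReal
      ((intervalIntegrable_iff_integrableOn_Ioc_of_le hab).1 hint)
      ((ae_restrict_mem measurableSet_Ioc).mono fun t ht => rpow_nonneg (by linarith [ht.1]) _),
    ← intervalIntegral.integral_of_le hab, intervalIntegral.integral_comp_sub_right (· ^ (α - 1)),
    integral_rpow (Or.inl (by linarith))]
  simp [hα.ne']

theorem lintegral_Ioc_rpow_sub_right (hα : 0 < α) (hab : a ≤ b) :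
    ∫⁻ t in Ioc a b, ENNReal.ofReal ((b - t) ^ (α - 1)) = ENNReal.ofReal ((b - a) ^ α / α) := by
  have hint : IntervalIntegrable (fun t => (b - t) ^ (α - 1)) volume a b := by
    simpa using ((intervalIntegral.intervalIntegrable_rpow' (by linarith : -1 < α - 1)
      (a := 0) (b := b - a)).comp_sub_left b).symm
  rw [← ofReal_integral_eq_lintegral_ofReal
      ((intervalIntegrable_iff_integrableOn_Ioc_of_le hab).1 hint)
      ((ae_restrict_mem measurableSet_Ioc).mono fun t ht => rpow_nonneg (by linarith [ht.2]) _),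
    ← intervalIntegral.integral_of_le hab, intervalIntegral.integral_comp_sub_left (· ^ (α - 1)),
    integral_rpow (Or.inl (by linarith))]
  simp [hα.ne']

noncomputable def rlKernel (α τ t : ℝ) : ℝ≥0∞ :=
  if τ < t then ENNReal.ofReal ((t - τ) ^ (α - 1)) else 0

theorem measurable_rlKernel (α : ℝ) : Measurable (Function.uncurry (rlKernel α)) :=
  Measurable.ite (measurableSet_lt measurable_fst measurable_snd)
    ((measurable_snd.sub measurable_fst).pow_const _).ennreal_ofReal measurable_const

theorem setLIntegral_Ioo_rlKernel_mul {τ : ℝ} (hτ : s ≤ τ) (f : ℝ → ℝ≥0∞) :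
    ∫⁻ t in Ioo s T, rlKernel α τ t * f t
      = ∫⁻ t in Ioc τ T, ENNReal.ofReal ((t - τ) ^ (α - 1)) * f t := by
  have hind : (fun t => rlKernel α τ t * f t)
      = (Ioi τ).indicator fun t => ENNReal.ofReal ((t - τ) ^ (α - 1)) * f t := by
    ext t; by_cases h : τ < t <;> simp [rlKernel, h]
  have hset : Ioi τ ∩ Ioo s T = Ioo τ T := by
    ext t
    simp only [mem_inter_iff, mem_Ioi, mem_Ioo]
    exact ⟨fun h => ⟨h.1, h.2.2⟩, fun h => ⟨h.1, hτ.trans_lt h.1, h.2⟩⟩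
  rw [hind, lintegral_indicator measurableSet_Ioi, Measure.restrict_restrict measurableSet_Ioi,
    hset, setLIntegral_congr Ioo_ae_eq_Ioc]

theorem setLIntegral_Ioo_rlKernel_left {t : ℝ} (ht : t ≤ T) :
    ∫⁻ τ in Ioo s T, rlKernel α τ t = ∫⁻ τ in Ioc s t, ENNReal.ofReal ((t - τ) ^ (α - 1)) := by
  have hind : (fun τ => rlKernel α τ t)
      = (Iio t).indicator fun τ => ENNReal.ofReal ((t - τ) ^ (α - 1)) := by
    ext τ; by_cases h : τ < t <;> simp [rlKernel, h]
  rw [hind, lintegral_indicator measurableSet_Iio, Measure.restrict_restrict measurableSet_Iio,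
    Iio_inter_Ioo, min_eq_left ht, setLIntegral_congr Ioo_ae_eq_Ioc]

/-- The right-sided Riemann–Liouville integral of order `α`, without the factor `1 / Γ(α)`. -/
noncomputable def rightRLIntegral (α T : ℝ) (g : ℝ → ℝ) (τ : ℝ) : ℝ :=
  ∫ t in Ioc τ T, (t - τ) ^ (α - 1) * g t

theorem eLpNorm_rightRLIntegral_le (hα : 0 < α) {g : ℝ → ℝ}
    (hg : AEStronglyMeasurable g (volume.restrict (Ioo s T))) :
    eLpNorm (rightRLIntegral α T g) 2 (volume.restrict (Ioo s T))
      ≤ ENNReal.ofReal ((T - s) ^ α / α) * eLpNorm g 2 (volume.restrict (Ioo s T)) := by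
  refine eLpNorm_two_le_of_kernel_bound (measurable_rlKernel α) hg ?_ ?_ ?_ <;>
    filter_upwards [ae_restrict_mem measurableSet_Ioo] with x ⟨hsx, hxT⟩
  · rw [setLIntegral_Ioo_rlKernel_mul hsx.le]
    refine (enorm_integral_le_lintegral_enorm _).trans_eq
      (setLIntegral_congr_fun measurableSet_Ioc fun t ht => ?_)
    rw [enorm_mul, Real.enorm_of_nonneg (rpow_nonneg (by linarith [ht.1]) _)]
  · have hrow := setLIntegral_Ioo_rlKernel_mul (α := α) (T := T) hsx.le 1
    simp only [Pi.one_apply, mul_one] at hrow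
    rw [hrow, lintegral_Ioc_rpow_sub_left hα hxT.le]
    gcongr
  · rw [setLIntegral_Ioo_rlKernel_left hxT.le, lintegral_Ioc_rpow_sub_right hα hsx.le]
    gcongr

end RiemannLiouville

theorem GH_eq_smul_rightRLIntegral (H T : ℝ) (g : ℝ → ℝ) :
    GH H T g = (cH H * (H - 1/2)) • rightRLIntegral (H - 1/2) T g := by
  ext τ
  rw [GH, Pi.smul_apply, rightRLIntegral, smul_eq_mul, show H - 1/2 - 1 = H - 3/2 by ring]

theorem GH_uniform_bound (s T : ℝ) (hsT : s < T) :
    ∃ c : ℝ, 0 < c ∧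
      ∀ H ∈ Set.Ioo (1/2 : ℝ) 1, ∀ g : ℝ → ℝ,
        MeasureTheory.MemLp g 2 (volume.restrict (Set.Ioo s T)) →
        eLpNorm (GH H T g) 2 (volume.restrict (Set.Ioo s T))
          ≤ ENNReal.ofReal c * eLpNorm g 2 (volume.restrict (Set.Ioo s T)) := by
  obtain ⟨C, hC, hcH⟩ := exists_pos_forall_cH_le
  refine ⟨C * max 1 (T - s), by positivity, fun H hH g hg => ?_⟩
  have hα : 0 < H - 1/2 := by linarith [hH.1]
  have hcH₀ : 0 ≤ cH H := sqrt_nonneg _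
  rw [GH_eq_smul_rightRLIntegral, eLpNorm_const_smul]
  calc ‖cH H * (H - 1/2)‖ₑ * eLpNorm (rightRLIntegral (H - 1/2) T g) 2 _
      ≤ ‖cH H * (H - 1/2)‖ₑ
          * (ENNReal.ofReal ((T - s) ^ (H - 1/2) / (H - 1/2)) * eLpNorm g 2 _) := by
        gcongr; exact eLpNorm_rightRLIntegral_le hα hg.1
    _ = ENNReal.ofReal (cH H * (T - s) ^ (H - 1/2)) * eLpNorm g 2 _ := by
        rw [← mul_assoc, Real.enorm_of_nonneg (by positivity), ← ENNReal.ofReal_mul (by positivity),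
          mul_assoc, mul_div_cancel₀ _ hα.ne']
    _ ≤ ENNReal.ofReal (C * max 1 (T - s)) * eLpNorm g 2 _ := by
        gcongr
        · exact hcH H hH
        · exact rpow_le_max_one (by linarith) hα.le (by linarith [hH.2])
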